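/- arXiv:0710.2661 — 2 statements merged into one kernel-verified Lean document; each statement's English description precedes it below -/
import Mathlib

section
/- Let γ, γ̄ : ℝ → ℝ³ be smooth curves with det(γ',γ'',γ''') ≡ 1 and det(γ̄',γ̄'',γ̄''') ≡ 1, having equal special affine curvatures χ₁^γ = χ₁^{γ̄} and χ₂^γ = χ₂^{γ̄} (as continuous functions of the parameter). Suppose at some point t₀, γ(t₀) = γ̄(t₀), γ'(t₀) = γ̄'(t₀), γ''(t₀) = γ̄''(t₀), and γ'''(t₀) = γ̄'''(t₀). Then γ = γ̄ on all of ℝ. -/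
open Matrix

/-- Determinant of the 3×3 matrix with columns `v₁ v₂ v₃`. -/
noncomputable def det3 (v₁ v₂ v₃ : Fin 3 → ℝ) : ℝ :=
  ((Matrix.of ![v₁, v₂, v₃]).transpose).det

/-- The frame matrix with columns `c' c'' c'''`. -/
noncomputable def frame (c : ℝ → Fin 3 → ℝ) (t : ℝ) : Matrix (Fin 3) (Fin 3) ℝ :=
  (Matrix.of ![deriv c t, deriv (deriv c) t, deriv (deriv (deriv c)) t]).transpose

/-- The curve `α_c = (c',c'',c''') / det(c',c'',c''')^(1/3)`. -/
noncomputable def alphaC (c : ℝ → Fin 3 → ℝ) (t : ℝ) : Matrix (Fin 3) (Fin 3) ℝ :=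
  ((det3 (deriv c t) (deriv (deriv c) t) (deriv (deriv (deriv c)) t)) ^ ((1:ℝ)/3))⁻¹ • frame c t

/-- The first special affine curvature `χ₁ = det(c'',c''',c'''')`. -/
noncomputable def chi1 (c : ℝ → Fin 3 → ℝ) (t : ℝ) : ℝ :=
  det3 (deriv (deriv c) t) (deriv (deriv (deriv c)) t) (deriv (deriv (deriv (deriv c))) t)

/-- The second special affine curvature `χ₂ = det(c',c''',c'''')`. -/
noncomputable def chi2 (c : ℝ → Fin 3 → ℝ) (t : ℝ) : ℝ :=
  det3 (deriv c t) (deriv (deriv (deriv c)) t) (deriv (deriv (deriv (deriv c))) t)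

/-! ### Auxiliary definitions and lemmas -/

lemma fin3_mk_two (h : 2 < 3) : (⟨2, h⟩ : Fin 3) = (2 : Fin 3) := rfl

lemma det3_eq (a b c : Fin 3 → ℝ) : det3 a b c =
    a 0 * b 1 * c 2 - a 0 * b 2 * c 1 + a 1 * b 2 * c 0 - a 1 * b 0 * c 2
      + a 2 * b 0 * c 1 - a 2 * b 1 * c 0 := by
  rw [det3, Matrix.det_transpose, Matrix.det_fin_three]
  simp [Matrix.cons_val_zero, Matrix.cons_val_one, Matrix.head_cons]
  ring

/-- The frame entries as scalar functions: `Fm c t i k` is the `i`-th component of the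
`(k+1)`-st derivative of `c` at `t`. -/
noncomputable def Fm (c : ℝ → Fin 3 → ℝ) (t : ℝ) (i : Fin 3) : Fin 3 → ℝ :=
  ![deriv c t i, deriv (deriv c) t i, deriv (deriv (deriv c)) t i]

/-- The "companion shift" of a frame matrix: the derivative of each row of the frame. -/
def shiftc (x1 x2 : ℝ) (A : Fin 3 → Fin 3 → ℝ) (i : Fin 3) : Fin 3 → ℝ :=
  ![A i 1, A i 2, x1 * A i 0 - x2 * A i 1]

/-- Explicit adjugate of a 3×3 array. -/
def Wa (A : Fin 3 → Fin 3 → ℝ) : Fin 3 → Fin 3 → ℝ :=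
  ![![A 1 1 * A 2 2 - A 1 2 * A 2 1, A 0 2 * A 2 1 - A 0 1 * A 2 2, A 0 1 * A 1 2 - A 0 2 * A 1 1],
    ![A 1 2 * A 2 0 - A 1 0 * A 2 2, A 0 0 * A 2 2 - A 0 2 * A 2 0, A 0 2 * A 1 0 - A 0 0 * A 1 2],
    ![A 1 0 * A 2 1 - A 1 1 * A 2 0, A 0 1 * A 2 0 - A 0 0 * A 2 1, A 0 0 * A 1 1 - A 0 1 * A 1 0]]

/-- The directional derivative (polarization) of `Wa` at `A` in direction `B`. -/
def DWa (A B : Fin 3 → Fin 3 → ℝ) : Fin 3 → Fin 3 → ℝ :=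
  ![![B 1 1 * A 2 2 + A 1 1 * B 2 2 - (B 1 2 * A 2 1 + A 1 2 * B 2 1),
     B 0 2 * A 2 1 + A 0 2 * B 2 1 - (B 0 1 * A 2 2 + A 0 1 * B 2 2),
     B 0 1 * A 1 2 + A 0 1 * B 1 2 - (B 0 2 * A 1 1 + A 0 2 * B 1 1)],
    ![B 1 2 * A 2 0 + A 1 2 * B 2 0 - (B 1 0 * A 2 2 + A 1 0 * B 2 2),
     B 0 0 * A 2 2 + A 0 0 * B 2 2 - (B 0 2 * A 2 0 + A 0 2 * B 2 0),
     B 0 2 * A 1 0 + A 0 2 * B 1 0 - (B 0 0 * A 1 2 + A 0 0 * B 1 2)],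
    ![B 1 0 * A 2 1 + A 1 0 * B 2 1 - (B 1 1 * A 2 0 + A 1 1 * B 2 0),
     B 0 1 * A 2 0 + A 0 1 * B 2 0 - (B 0 0 * A 2 1 + A 0 0 * B 2 1),
     B 0 0 * A 1 1 + A 0 0 * B 1 1 - (B 0 1 * A 1 0 + A 0 1 * B 1 0)]]

lemma smooth_d {f : ℝ → Fin 3 → ℝ} (hf : ContDiff ℝ (⊤ : ℕ∞) f) :
    ContDiff ℝ (⊤ : ℕ∞) (deriv f) := (contDiff_infty_iff_deriv.mp hf).2

lemma compHasDeriv {f : ℝ → Fin 3 → ℝ} (hf : ContDiff ℝ (⊤ : ℕ∞) f) (t : ℝ) (i : Fin 3) :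
    HasDerivAt (fun s => f s i) (deriv f t i) t :=
  hasDerivAt_pi.mp ((hf.differentiable (by simp)) t).hasDerivAt i

/-- The fundamental ODE: `c'''' = χ₁ c' - χ₂ c''` for a special affine curve. -/
lemma derivODE (c : ℝ → Fin 3 → ℝ) (hc : ContDiff ℝ (⊤ : ℕ∞) c)
    (hdet : ∀ t, det3 (deriv c t) (deriv (deriv c) t) (deriv (deriv (deriv c)) t) = 1)
    (t : ℝ) (i : Fin 3) :
    HasDerivAt (fun s => deriv (deriv (deriv c)) s i)
      (chi1 c t * deriv c t i - chi2 c t * deriv (deriv c) t i) t := by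
  have hc1 := smooth_d hc
  have hc2 := smooth_d hc1
  have hc3 := smooth_d hc2
  have a1 : ∀ j, HasDerivAt (fun s => deriv c s j) (deriv (deriv c) t j) t :=
    compHasDeriv hc1 t
  have a2 : ∀ j, HasDerivAt (fun s => deriv (deriv c) s j) (deriv (deriv (deriv c)) t j) t :=
    compHasDeriv hc2 t
  have a3 : ∀ j, HasDerivAt (fun s => deriv (deriv (deriv c)) s j)
      (deriv (deriv (deriv (deriv c))) t j) t := compHasDeriv hc3 t
  have hψ := (((((((a1 0).mul (a2 1)).mul (a3 2)).sub (((a1 0).mul (a2 2)).mul (a3 1))).add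
      (((a1 1).mul (a2 2)).mul (a3 0))).sub (((a1 1).mul (a2 0)).mul (a3 2))).add
      (((a1 2).mul (a2 0)).mul (a3 1))).sub (((a1 2).mul (a2 1)).mul (a3 0))
  have hφ := hψ.congr_of_eventuallyEq (Filter.Eventually.of_forall fun s =>
    det3_eq (deriv c s) (deriv (deriv c) s) (deriv (deriv (deriv c)) s))
  have hone : HasDerivAt
      (fun s => det3 (deriv c s) (deriv (deriv c) s) (deriv (deriv (deriv c)) s)) 0 t := by
    have heq : (fun s => det3 (deriv c s) (deriv (deriv c) s) (deriv (deriv (deriv c)) s))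
        = fun _ => (1 : ℝ) := funext fun s => hdet s
    rw [heq]; exact hasDerivAt_const t 1
  have hD0 := hφ.unique hone
  have hzero : deriv c t 0 * deriv (deriv c) t 1 * deriv (deriv (deriv (deriv c))) t 2
      - deriv c t 0 * deriv (deriv c) t 2 * deriv (deriv (deriv (deriv c))) t 1
      + deriv c t 1 * deriv (deriv c) t 2 * deriv (deriv (deriv (deriv c))) t 0
      - deriv c t 1 * deriv (deriv c) t 0 * deriv (deriv (deriv (deriv c))) t 2
      + deriv c t 2 * deriv (deriv c) t 0 * deriv (deriv (deriv (deriv c))) t 1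
      - deriv c t 2 * deriv (deriv c) t 1 * deriv (deriv (deriv (deriv c))) t 0 = 0 := by
    simp only [Pi.mul_apply] at hD0
    linear_combination hD0
  have hd := hdet t
  rw [det3_eq] at hd
  have key : chi1 c t * deriv c t i - chi2 c t * deriv (deriv c) t i
      = deriv (deriv (deriv (deriv c))) t i := by
    rw [chi1, chi2, det3_eq, det3_eq]
    fin_cases i <;> simp only [Fin.mk_zero, Fin.mk_one, fin3_mk_two]
    · linear_combination deriv (deriv (deriv (deriv c))) t 0 * hd
        - deriv (deriv (deriv c)) t 0 * hzero
    · linear_combination deriv (deriv (deriv (deriv c))) t 1 * hd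
        - deriv (deriv (deriv c)) t 1 * hzero
    · linear_combination deriv (deriv (deriv (deriv c))) t 2 * hd
        - deriv (deriv (deriv c)) t 2 * hzero
  have := a3 i
  rwa [← key] at this

/-- The key algebraic identity: the derivative of `F · adj(F̄)` vanishes identically. -/
lemma algzero (x1 x2 : ℝ) (A B : Fin 3 → Fin 3 → ℝ) (i j : Fin 3) :
    shiftc x1 x2 A i 0 * Wa B 0 j + A i 0 * DWa B (shiftc x1 x2 B) 0 j
      + (shiftc x1 x2 A i 1 * Wa B 1 j + A i 1 * DWa B (shiftc x1 x2 B) 1 j)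
      + (shiftc x1 x2 A i 2 * Wa B 2 j + A i 2 * DWa B (shiftc x1 x2 B) 2 j) = 0 := by
  fin_cases j <;>
    · simp only [shiftc, Wa, DWa, Fin.mk_zero, Fin.mk_one, fin3_mk_two,
        Matrix.cons_val_zero, Matrix.cons_val_one, Matrix.head_cons,
        Matrix.cons_val_two, Matrix.tail_cons]
      ring

theorem stmt_7 (γ γbar : ℝ → Fin 3 → ℝ) (hγ : ContDiff ℝ (⊤ : ℕ∞) γ) (hγbar : ContDiff ℝ (⊤ : ℕ∞) γbar)
    (hdet : ∀ t, det3 (deriv γ t) (deriv (deriv γ) t) (deriv (deriv (deriv γ)) t) = 1)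
    (hdetbar : ∀ t, det3 (deriv γbar t) (deriv (deriv γbar) t) (deriv (deriv (deriv γbar)) t) = 1)
    (hχ1 : ∀ t, chi1 γ t = chi1 γbar t) (hχ2 : ∀ t, chi2 γ t = chi2 γbar t)
    (t₀ : ℝ) (h0 : γ t₀ = γbar t₀) (h1 : deriv γ t₀ = deriv γbar t₀)
    (h2 : deriv (deriv γ) t₀ = deriv (deriv γbar) t₀)
    (h3 : deriv (deriv (deriv γ)) t₀ = deriv (deriv (deriv γbar)) t₀) :
    γ = γbar := by
  have hγ' : ContDiff ℝ (⊤ : ℕ∞) γ := hγ.of_le (by simp)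
  have hγbar' : ContDiff ℝ (⊤ : ℕ∞) γbar := hγbar.of_le (by simp)
  have hγ1 := smooth_d hγ'
  have hγ2 := smooth_d hγ1
  have hb1 := smooth_d hγbar'
  have hb2 := smooth_d hb1
  -- derivative of the frame entries of γ
  have hM : ∀ (t : ℝ) (i k : Fin 3), HasDerivAt (fun s => Fm γ s i k)
      (shiftc (chi1 γ t) (chi2 γ t) (Fm γ t) i k) t := by
    intro t i k
    fin_cases k
    · simpa [Fm, shiftc] using compHasDeriv hγ1 t i
    · simpa [Fm, shiftc] using compHasDeriv hγ2 t i
    · simpa [Fm, shiftc] using derivODE γ hγ' hdet t i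
  -- derivative of the frame entries of γbar, with the *same* curvature coefficients
  have hMb : ∀ (t : ℝ) (i k : Fin 3), HasDerivAt (fun s => Fm γbar s i k)
      (shiftc (chi1 γ t) (chi2 γ t) (Fm γbar t) i k) t := by
    intro t i k
    rw [hχ1 t, hχ2 t]
    fin_cases k
    · simpa [Fm, shiftc] using compHasDeriv hb1 t i
    · simpa [Fm, shiftc] using compHasDeriv hb2 t i
    · simpa [Fm, shiftc] using derivODE γbar hγbar' hdetbar t i
  -- derivative of the adjugate entries of the frame of γbar
  have hWd : ∀ (t : ℝ) (k j : Fin 3), HasDerivAt (fun s => Wa (Fm γbar s) k j)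
      (DWa (Fm γbar t) (shiftc (chi1 γ t) (chi2 γ t) (Fm γbar t)) k j) t := by
    intro t k j
    fin_cases k <;> fin_cases j <;>
      · simp only [Wa, DWa, Fin.mk_zero, Fin.mk_one, fin3_mk_two,
          Matrix.cons_val_zero, Matrix.cons_val_one, Matrix.head_cons,
          Matrix.cons_val_two, Matrix.tail_cons]
        exact ((hMb t _ _).mul (hMb t _ _)).sub ((hMb t _ _).mul (hMb t _ _))
  -- `F · adj(F̄)` is constant
  have hcon : ∀ (i j : Fin 3) (t : ℝ),
      Fm γ t i 0 * Wa (Fm γbar t) 0 j + Fm γ t i 1 * Wa (Fm γbar t) 1 j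
        + Fm γ t i 2 * Wa (Fm γbar t) 2 j
      = Fm γ t₀ i 0 * Wa (Fm γbar t₀) 0 j + Fm γ t₀ i 1 * Wa (Fm γbar t₀) 1 j
        + Fm γ t₀ i 2 * Wa (Fm γbar t₀) 2 j := by
    intro i j t
    have hder : ∀ s : ℝ, HasDerivAt (fun u => Fm γ u i 0 * Wa (Fm γbar u) 0 j
        + Fm γ u i 1 * Wa (Fm γbar u) 1 j + Fm γ u i 2 * Wa (Fm γbar u) 2 j) 0 s := by
      intro s
      have H := (((hM s i 0).mul (hWd s 0 j)).add ((hM s i 1).mul (hWd s 1 j))).add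
        ((hM s i 2).mul (hWd s 2 j))
      rw [algzero (chi1 γ s) (chi2 γ s) (Fm γ s) (Fm γbar s) i j] at H
      exact H
    exact is_const_of_deriv_eq_zero (fun s => (hder s).differentiableAt)
      (fun s => (hder s).deriv) t t₀
  -- the frames agree at `t₀`
  have hFt0 : Fm γ t₀ = Fm γbar t₀ := by
    funext i k
    fin_cases k <;> simp [Fm, h1, h2, h3]
  -- the determinant of the frame of γbar, in terms of `Fm`
  have hdbar : ∀ s : ℝ, Fm γbar s 0 0 * Fm γbar s 1 1 * Fm γbar s 2 2
      - Fm γbar s 0 0 * Fm γbar s 2 1 * Fm γbar s 1 2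
      + Fm γbar s 1 0 * Fm γbar s 2 1 * Fm γbar s 0 2
      - Fm γbar s 1 0 * Fm γbar s 0 1 * Fm γbar s 2 2
      + Fm γbar s 2 0 * Fm γbar s 0 1 * Fm γbar s 1 2
      - Fm γbar s 2 0 * Fm γbar s 1 1 * Fm γbar s 0 2 = 1 := by
    intro s
    have h := hdetbar s
    rw [det3_eq] at h
    simp only [Fm, Matrix.cons_val_zero, Matrix.cons_val_one, Matrix.head_cons,
      Matrix.cons_val_two, Matrix.tail_cons]
    linear_combination h
  -- conclude that the first derivatives agree
  have hderiv : deriv γ = deriv γbar := by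
    funext t i
    have E0 := hcon i 0 t
    have E1 := hcon i 1 t
    have E2 := hcon i 2 t
    rw [hFt0] at E0 E1 E2
    have hdbt := hdbar t
    have hdb0 := hdbar t₀
    have goal' : Fm γ t i 0 = Fm γbar t i 0 := by
      simp only [Wa, Matrix.cons_val_zero, Matrix.cons_val_one, Matrix.head_cons,
        Matrix.cons_val_two, Matrix.tail_cons] at E0 E1 E2
      fin_cases i <;> simp only [Fin.mk_zero, Fin.mk_one, fin3_mk_two] at E0 E1 E2 ⊢
      · linear_combination Fm γbar t 0 0 * E0 + Fm γbar t 1 0 * E1 + Fm γbar t 2 0 * E2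
          - Fm γ t 0 0 * hdbt + Fm γbar t 0 0 * hdb0
      · linear_combination Fm γbar t 0 0 * E0 + Fm γbar t 1 0 * E1 + Fm γbar t 2 0 * E2
          - Fm γ t 1 0 * hdbt + Fm γbar t 1 0 * hdb0
      · linear_combination Fm γbar t 0 0 * E0 + Fm γbar t 1 0 * E1 + Fm γbar t 2 0 * E2
          - Fm γ t 2 0 * hdbt + Fm γbar t 2 0 * hdb0
    simpa [Fm] using goal'
  -- conclude that the curves agree
  funext t i
  have hz : ∀ s : ℝ, HasDerivAt (fun u => γ u i - γbar u i)
      (deriv γ s i - deriv γbar s i) s :=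
    fun s => (compHasDeriv hγ' s i).sub (compHasDeriv hγbar' s i)
  have hconst := is_const_of_deriv_eq_zero (f := fun u => γ u i - γbar u i)
    (fun s => (hz s).differentiableAt)
    (fun s => by rw [(hz s).deriv, hderiv, sub_self]) t t₀
  have h00 : γ t₀ i - γbar t₀ i = 0 := by rw [h0, sub_self]
  rw [h00] at hconst
  linarith [hconst]
end

section
/- Two smooth curves c, c̄ : ℝ → ℝ³ with det(c',c'',c''') ≡ 1 and det(c̄',c̄'',c̄''') ≡ 1 are related by c̄ = A ∘ c for a special affine transformation A (A(x) = Bx + v with det B = 1) if and only if χ₁^c = χ₁^{c̄} and χ₂^c = χ₂^{c̄} as functions of the parameter. -/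
open Matrix
open scoped ContDiff

attribute [local instance] Matrix.linftyOpNormedRing Matrix.linftyOpNormedAlgebra


lemma det3_expand (v₁ v₂ v₃ : Fin 3 → ℝ) : det3 v₁ v₂ v₃ =
    v₁ 0 * v₂ 1 * v₃ 2 - v₁ 0 * v₂ 2 * v₃ 1 - v₁ 1 * v₂ 0 * v₃ 2
    + v₁ 1 * v₂ 2 * v₃ 0 + v₁ 2 * v₂ 0 * v₃ 1 - v₁ 2 * v₂ 1 * v₃ 0 := by
  simp [det3, Matrix.det_fin_three, Matrix.vecHead, Matrix.vecTail, Matrix.transpose_apply]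


lemma hasDerivAt_pi3 {f : ℝ → Fin 3 → ℝ} {f' : Fin 3 → ℝ} {t : ℝ} (h : HasDerivAt f f' t) (i : Fin 3) :
    HasDerivAt (fun s => f s i) (f' i) t := hasDerivAt_pi.mp h i

lemma hasDerivAt_det3 {f g h : ℝ → Fin 3 → ℝ} {f' g' h' : Fin 3 → ℝ} {t : ℝ}
    (hf : HasDerivAt f f' t) (hg : HasDerivAt g g' t) (hh : HasDerivAt h h' t) :
    HasDerivAt (fun s => det3 (f s) (g s) (h s))
      (det3 f' (g t) (h t) + det3 (f t) g' (h t) + det3 (f t) (g t) h') t := by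
  have F := hasDerivAt_pi3 hf
  have G := hasDerivAt_pi3 hg
  have H := hasDerivAt_pi3 hh
  simp only [det3_expand]
  have big := (((((F 0).mul (G 1)).mul (H 2)).sub (((F 0).mul (G 2)).mul (H 1))).sub
      (((F 1).mul (G 0)).mul (H 2))).add ((((F 1).mul (G 2)).mul (H 0)).add
      (((((F 2).mul (G 0)).mul (H 1))).sub (((F 2).mul (G 1)).mul (H 0))))
  refine (big.congr_deriv ?_).congr_of_eventuallyEq (Filter.Eventually.of_forall fun s => ?_)
  · simp only [Pi.mul_apply]; ring
  · simp only [Pi.mul_apply, Pi.sub_apply, Pi.add_apply]; ring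





lemma contDiff_deriv {c : ℝ → Fin 3 → ℝ} (hc : ContDiff ℝ ∞ c) :
    ContDiff ℝ ∞ (deriv c) :=
  (contDiff_infty_iff_deriv.mp hc).2

lemma fourth_deriv_eq {c : ℝ → Fin 3 → ℝ} (hc : ContDiff ℝ ∞ c)
    (hdet : ∀ t, det3 (deriv c t) (deriv (deriv c) t) (deriv (deriv (deriv c)) t) = 1) (t : ℝ) :
    deriv (deriv (deriv (deriv c))) t = chi1 c t • deriv c t - chi2 c t • deriv (deriv c) t := by
  have h1 : ContDiff ℝ ∞ (deriv c) := contDiff_deriv hc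
  have h2 : ContDiff ℝ ∞ (deriv (deriv c)) := contDiff_deriv h1
  have h3 : ContDiff ℝ ∞ (deriv (deriv (deriv c))) := contDiff_deriv h2
  have d1 : HasDerivAt (deriv c) (deriv (deriv c) t) t :=
    ((h1.differentiable (by norm_num)) t).hasDerivAt
  have d2 : HasDerivAt (deriv (deriv c)) (deriv (deriv (deriv c)) t) t :=
    ((h2.differentiable (by norm_num)) t).hasDerivAt
  have d3 : HasDerivAt (deriv (deriv (deriv c))) (deriv (deriv (deriv (deriv c))) t) t :=
    ((h3.differentiable (by norm_num)) t).hasDerivAt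
  have hconst : HasDerivAt (fun s => det3 (deriv c s) (deriv (deriv c) s) (deriv (deriv (deriv c)) s)) 0 t := by
    have : (fun s => det3 (deriv c s) (deriv (deriv c) s) (deriv (deriv (deriv c)) s)) = fun _ => (1:ℝ) :=
      funext hdet
    rw [this]; exact hasDerivAt_const t 1
  have hD := (hasDerivAt_det3 d1 d2 d3).unique hconst
  have hzero : det3 (deriv c t) (deriv (deriv c) t) (deriv (deriv (deriv (deriv c))) t) = 0 := by
    simp only [det3_expand] at hD ⊢
    linarith [hD]
  have e1 : chi1 c t = det3 (deriv (deriv c) t) (deriv (deriv (deriv c)) t) (deriv (deriv (deriv (deriv c))) t) := rfl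
  have e2 : chi2 c t = det3 (deriv c t) (deriv (deriv (deriv c)) t) (deriv (deriv (deriv (deriv c))) t) := rfl
  have e0 := hdet t
  rw [det3_expand] at e1 e2 e0
  rw [det3_expand] at hzero
  have hA : (frame c t).det = 1 := hdet t
  have hcr : cramer (frame c t)
      (deriv (deriv (deriv (deriv c))) t - (chi1 c t • deriv c t - chi2 c t • deriv (deriv c) t)) = 0 := by
    funext j
    rw [cramer_apply]
    fin_cases j
    · simp [Matrix.det_fin_three, Matrix.updateCol_apply, frame, Matrix.vecHead, Matrix.vecTail]
      linear_combination -e1 - chi1 c t * e0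
    · simp [Matrix.det_fin_three, Matrix.updateCol_apply, frame, Matrix.vecHead, Matrix.vecTail]
      linear_combination e2 + chi2 c t * e0
    · simp [Matrix.det_fin_three, Matrix.updateCol_apply, frame, Matrix.vecHead, Matrix.vecTail]
      linear_combination hzero
  have hmv := Matrix.mulVec_cramer (frame c t)
      (deriv (deriv (deriv (deriv c))) t - (chi1 c t • deriv c t - chi2 c t • deriv (deriv c) t))
  rw [hcr, hA, Matrix.mulVec_zero, one_smul] at hmv
  exact sub_eq_zero.mp hmv.symm

/-- the linear equivalence sending `f` to the matrix with columns `f 0, f 1, f 2`. -/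
noncomputable def colEquiv : (Fin 3 → Fin 3 → ℝ) ≃L[ℝ] Matrix (Fin 3) (Fin 3) ℝ :=
  LinearEquiv.toContinuousLinearEquiv
    { toFun := fun f => (Matrix.of f).transpose
      invFun := fun M => Matrix.of.symm M.transpose
      left_inv := fun f => rfl
      right_inv := fun M => rfl
      map_add' := fun f g => rfl
      map_smul' := fun r f => rfl }

lemma hasDerivAt_frame {c : ℝ → Fin 3 → ℝ} (hc : ContDiff ℝ ∞ c) (t : ℝ) :
    HasDerivAt (frame c)
      ((Matrix.of ![deriv (deriv c) t, deriv (deriv (deriv c)) t,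
          deriv (deriv (deriv (deriv c))) t]).transpose) t := by
  have h1 : ContDiff ℝ ∞ (deriv c) := contDiff_deriv hc
  have h2 : ContDiff ℝ ∞ (deriv (deriv c)) := contDiff_deriv h1
  have h3 : ContDiff ℝ ∞ (deriv (deriv (deriv c))) := contDiff_deriv h2
  have hg : HasDerivAt (fun s => (![deriv c s, deriv (deriv c) s, deriv (deriv (deriv c)) s] :
      Fin 3 → Fin 3 → ℝ))
      (![deriv (deriv c) t, deriv (deriv (deriv c)) t, deriv (deriv (deriv (deriv c))) t]) t := by
    rw [hasDerivAt_pi]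
    intro i
    fin_cases i
    · simpa using ((h1.differentiable (by norm_num)) t).hasDerivAt
    · simpa using ((h2.differentiable (by norm_num)) t).hasDerivAt
    · simpa using ((h3.differentiable (by norm_num)) t).hasDerivAt
  have := colEquiv.toContinuousLinearMap.hasFDerivAt.comp_hasDerivAt t hg
  exact this

/-- the curvature coefficient matrix -/
noncomputable def Kmat (c : ℝ → Fin 3 → ℝ) (t : ℝ) : Matrix (Fin 3) (Fin 3) ℝ :=
  Matrix.of ![![0, 0, chi1 c t], ![1, 0, -chi2 c t], ![0, 1, 0]]

lemma hasDerivAt_frame' {c : ℝ → Fin 3 → ℝ} (hc : ContDiff ℝ ∞ c)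
    (hdet : ∀ t, det3 (deriv c t) (deriv (deriv c) t) (deriv (deriv (deriv c)) t) = 1) (t : ℝ) :
    HasDerivAt (frame c) (frame c t * Kmat c t) t := by
  have h := hasDerivAt_frame hc t
  convert h using 1
  have h4 := fourth_deriv_eq hc hdet t
  ext i j
  fin_cases j <;>
    simp [Matrix.mul_apply, Fin.sum_univ_three, frame, Kmat, h4, Matrix.vecHead, Matrix.vecTail] <;>
    ring

lemma hasDerivAt_mulVec (B : Matrix (Fin 3) (Fin 3) ℝ) {c : ℝ → Fin 3 → ℝ} {c' : Fin 3 → ℝ} {t : ℝ}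
    (hc : HasDerivAt c c' t) : HasDerivAt (fun s => B.mulVec (c s)) (B.mulVec c') t := by
  have := (Matrix.mulVecLin B).toContinuousLinearMap.hasFDerivAt.comp_hasDerivAt t hc
  exact this

lemma deriv_of_affine {B : Matrix (Fin 3) (Fin 3) ℝ} {v : Fin 3 → ℝ} {c cbar : ℝ → Fin 3 → ℝ}
    (hc : Differentiable ℝ c) (h : ∀ t, cbar t = B.mulVec (c t) + v) (t : ℝ) :
    deriv cbar t = B.mulVec (deriv c t) := by
  have h1 : HasDerivAt (fun s => B.mulVec (c s) + v) (B.mulVec (deriv c t)) t :=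
    (hasDerivAt_mulVec B (hc t).hasDerivAt).add_const v
  have hfun : cbar = fun s => B.mulVec (c s) + v := funext h
  rw [hfun]
  exact h1.deriv

lemma det3_mulVec {B : Matrix (Fin 3) (Fin 3) ℝ} (hB : B.det = 1) (v₁ v₂ v₃ : Fin 3 → ℝ) :
    det3 (B.mulVec v₁) (B.mulVec v₂) (B.mulVec v₃) = det3 v₁ v₂ v₃ := by
  have key : (Matrix.of ![B.mulVec v₁, B.mulVec v₂, B.mulVec v₃]).transpose
      = B * (Matrix.of ![v₁, v₂, v₃]).transpose := by
    ext i j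
    fin_cases j <;>
      simp [Matrix.mul_apply, Matrix.mulVec, dotProduct, Fin.sum_univ_three,
        Matrix.vecHead, Matrix.vecTail]
  rw [det3, key, Matrix.det_mul, hB, one_mul]; rfl

lemma chi_of_affine {B : Matrix (Fin 3) (Fin 3) ℝ} {v : Fin 3 → ℝ} {c cbar : ℝ → Fin 3 → ℝ}
    (hc : ContDiff ℝ ∞ c) (hB : B.det = 1)
    (h : ∀ t, cbar t = B.mulVec (c t) + v) :
    (∀ t, chi1 c t = chi1 cbar t) ∧ (∀ t, chi2 c t = chi2 cbar t) := by
  have h1c : ContDiff ℝ ∞ (deriv c) := contDiff_deriv hc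
  have h2c : ContDiff ℝ ∞ (deriv (deriv c)) := contDiff_deriv h1c
  have h3c : ContDiff ℝ ∞ (deriv (deriv (deriv c))) := contDiff_deriv h2c
  have e1 : ∀ t, deriv cbar t = B.mulVec (deriv c t) :=
    deriv_of_affine (hc.differentiable (by norm_num)) h
  have e2 : ∀ t, deriv (deriv cbar) t = B.mulVec (deriv (deriv c) t) :=
    deriv_of_affine (h1c.differentiable (by norm_num)) (v := 0)
      (fun t => by rw [e1 t, add_zero])
  have e3 : ∀ t, deriv (deriv (deriv cbar)) t = B.mulVec (deriv (deriv (deriv c)) t) :=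
    deriv_of_affine (h2c.differentiable (by norm_num)) (v := 0)
      (fun t => by rw [e2 t, add_zero])
  have e4 : ∀ t, deriv (deriv (deriv (deriv cbar))) t = B.mulVec (deriv (deriv (deriv (deriv c))) t) :=
    deriv_of_affine (h3c.differentiable (by norm_num)) (v := 0)
      (fun t => by rw [e3 t, add_zero])
  constructor <;> intro t
  · rw [chi1, chi1, e2 t, e3 t, e4 t, det3_mulVec hB]
  · rw [chi2, chi2, e1 t, e3 t, e4 t, det3_mulVec hB]


theorem stmt_8 (c cbar : ℝ → Fin 3 → ℝ) (hc : ContDiff ℝ (⊤ : ℕ∞) c) (hcbar : ContDiff ℝ (⊤ : ℕ∞) cbar)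
    (hdet : ∀ t, det3 (deriv c t) (deriv (deriv c) t) (deriv (deriv (deriv c)) t) = 1)
    (hdetbar : ∀ t, det3 (deriv cbar t) (deriv (deriv cbar) t) (deriv (deriv (deriv cbar)) t) = 1) :
    (∃ (B : Matrix.SpecialLinearGroup (Fin 3) ℝ) (v : Fin 3 → ℝ),
        ∀ t, cbar t = (B : Matrix (Fin 3) (Fin 3) ℝ).mulVec (c t) + v)
      ↔ ((∀ t, chi1 c t = chi1 cbar t) ∧ (∀ t, chi2 c t = chi2 cbar t)) := by
  have hc' : ContDiff ℝ ∞ c := hc.of_le (by simp)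
  have hcbar' : ContDiff ℝ ∞ cbar := hcbar.of_le (by simp)
  constructor
  · rintro ⟨B, v, h⟩
    exact chi_of_affine hc' B.prop h
  · rintro ⟨h1, h2⟩
    have hKeq : ∀ t, Kmat cbar t = Kmat c t := by
      intro t; rw [Kmat, Kmat, h1 t, h2 t]
    have hF := fun t => hasDerivAt_frame' hc' hdet t
    have hG : ∀ t, HasDerivAt (frame cbar) (frame cbar t * Kmat c t) t := by
      intro t
      have := hasDerivAt_frame' hcbar' hdetbar t
      rwa [hKeq t] at this
    have hunit : ∀ t, IsUnit (frame c t) := fun t =>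
      (Matrix.isUnit_iff_isUnit_det _).mpr (by rw [show (frame c t).det = 1 from hdet t]; exact isUnit_one)
    set N := fun t => Ring.inverse (frame c t) with hNdef
    have hNF : ∀ t, N t * frame c t = 1 := fun t => Ring.inverse_mul_cancel _ (hunit t)
    have hNder : ∀ t, HasDerivAt N (-(N t * (frame c t * Kmat c t) * N t)) t := by
      intro t
      obtain ⟨u, hu⟩ := hunit t
      have hinv : (↑u⁻¹ : Matrix (Fin 3) (Fin 3) ℝ) = N t := by
        show _ = Ring.inverse (frame c t)
        rw [← hu, Ring.inverse_unit]
      have h1' := hasFDerivAt_ringInverse (𝕜 := ℝ) u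
      rw [hu] at h1'
      have hcomp := h1'.comp_hasDerivAt t (hF t)
      simp only [ContinuousLinearMap.neg_apply, ContinuousLinearMap.mulLeftRight_apply, hinv] at hcomp
      exact hcomp
    have hP : ∀ t, HasDerivAt (fun s => frame cbar s * N s) 0 t := by
      intro t
      have hm := (hG t).mul (hNder t)
      have e : frame cbar t * Kmat c t * N t + frame cbar t * -(N t * (frame c t * Kmat c t) * N t) = 0 := by
        rw [show N t * (frame c t * Kmat c t) = Kmat c t by rw [← mul_assoc, hNF t, one_mul]]
        rw [mul_neg, mul_assoc]
        exact add_neg_cancel _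
      rw [e] at hm
      exact hm
    have hconst : ∀ t, frame cbar t * N t = frame cbar 0 * N 0 := fun t =>
      is_const_of_deriv_eq_zero (fun x => (hP x).differentiableAt) (fun x => (hP x).deriv) t 0
    set B₀ := frame cbar 0 * N 0 with hB₀
    have hGF : ∀ t, frame cbar t = B₀ * frame c t := by
      intro t
      calc frame cbar t = frame cbar t * (N t * frame c t) := by rw [hNF t, mul_one]
        _ = (frame cbar t * N t) * frame c t := by rw [mul_assoc]
        _ = B₀ * frame c t := by rw [hconst t]
    have hdetB : B₀.det = 1 := by
      have h0 := congrArg Matrix.det (hGF 0)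
      rw [Matrix.det_mul, show (frame c 0).det = 1 from hdet 0,
        show (frame cbar 0).det = 1 from hdetbar 0, mul_one] at h0
      exact h0.symm
    have hd1 : ∀ t, deriv cbar t = B₀.mulVec (deriv c t) := by
      intro t
      funext i
      have := congrFun (congrFun (hGF t) i) 0
      simpa [frame, Matrix.mul_apply, Matrix.mulVec, dotProduct, Fin.sum_univ_three] using this
    have hdD : ∀ t, HasDerivAt (fun s => cbar s - B₀.mulVec (c s)) 0 t := by
      intro t
      have ha : HasDerivAt cbar (deriv cbar t) t :=
        ((hcbar'.differentiable (by norm_num)) t).hasDerivAt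
      have hb := hasDerivAt_mulVec B₀ ((hc'.differentiable (by norm_num)) t).hasDerivAt
      have := ha.sub hb
      rwa [hd1 t, sub_self] at this
    refine ⟨⟨B₀, hdetB⟩, cbar 0 - B₀.mulVec (c 0), fun t => ?_⟩
    have hcc := is_const_of_deriv_eq_zero (fun x => (hdD x).differentiableAt)
      (fun x => (hdD x).deriv) t 0
    have : cbar t = B₀.mulVec (c t) + (cbar 0 - B₀.mulVec (c 0)) := by
      rw [← hcc]; abel
    exact this
end
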